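/- arXiv:2204.01799 — 2 statements merged into one kernel-verified Lean document; each statement's English description precedes it below -/
import Mathlib

section
/- Suppose n is a natural number and f_n : [ω_n]^{n+1} → [ω_n]^{<ℵ_0} is a set mapping satisfying: (1) f_n(s) ⊆ max(s) for all s ∈ [ω_n]^{n+1}, and (2) for every u ∈ [ω_n]^{n+2} there is α ∈ u with α < max(u) and α ∈ f_n(u \ {α}). Then there exists a set mapping f_{n+1} : [ω_{n+1}]^{n+2} → [ω_{n+1}]^{<ℵ_0} satisfying: (1') f_{n+1}(s) ⊆ max(s) for all s ∈ [ω_{n+1}]^{n+2}, and (2') for every t ∈ [ω_{n+1}]^{n+3} there is α ∈ t with α < max(t) and α ∈ f_{n+1}(t \ {α}). -/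
/-!
For `δ < ω_{n+1}` fix an injection `e_δ : δ → ωₙ` and put `β ∈ g(s)` iff `β < δ` and
`e_δ(β) ∈ f(e_δ[s ∖ {δ}])`, where `δ = max s`. If `t` has `n + 3` elements and maximum `δ`, the
property of `f` applied to the `(n + 2)`-set `e_δ[t ∖ {δ}] ⊆ ωₙ` yields `α ∈ t ∖ {δ}` with
`e_δ(α) ∈ f(e_δ[t ∖ {α, δ}])`; as `max (t ∖ {α}) = δ`, this says `α ∈ g(t ∖ {α})`.
-/

open Finset Set

section ChartPullback

variable {β γ : Type*} [LinearOrder β] [Nonempty β] [DecidableEq γ]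

/-- `e δ` is meant to inject `Iio δ` into `γ`; a set `s` is read through `e (max s)`. -/
noncomputable def chartPullback (e : β → β → γ) (f : Finset γ → Finset γ) (s : Finset β) :
    Finset β :=
  if hs : s.Nonempty then
    {x ∈ (f ((s.erase (s.max' hs)).image (e (s.max' hs)))).image
        (Function.invFunOn (e (s.max' hs)) (Iio (s.max' hs))) | x < s.max' hs}
  else ∅

variable {e : β → β → γ} {f : Finset γ → Finset γ}

theorem lt_max'_of_mem_chartPullback {s : Finset β} (hs : s.Nonempty) {x : β}
    (hx : x ∈ chartPullback e f s) : x < s.max' hs := by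
  rw [chartPullback, dif_pos hs] at hx
  exact (mem_filter.mp hx).2

theorem mem_chartPullback {s : Finset β} {δ x : β} (hδ : δ ∈ s) (hle : ∀ y ∈ s, y ≤ δ)
    (hx : x < δ) (hinj : InjOn (e δ) (Iio δ)) (hfx : e δ x ∈ f ((s.erase δ).image (e δ))) :
    x ∈ chartPullback e f s := by
  have hs : s.Nonempty := ⟨δ, hδ⟩
  have hmax : s.max' hs = δ := (max'_eq_iff s hs δ).mpr ⟨hδ, hle⟩
  rw [chartPullback, dif_pos hs, hmax]
  exact mem_filter.mpr ⟨mem_image.mpr ⟨e δ x, hfx, hinj.leftInvOn_invFunOn hx⟩, hx⟩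

theorem exists_mem_chartPullback_erase {k : ℕ} {A : Set γ}
    (hf : ∀ u : Finset γ, ↑u ⊆ A → u.card = k + 1 → ∃ a ∈ u, a ∈ f (u.erase a))
    {t : Finset β} (ht : t.Nonempty) (hcard : t.card = k + 2)
    (hinj : InjOn (e (t.max' ht)) (Iio (t.max' ht)))
    (hmaps : MapsTo (e (t.max' ht)) (Iio (t.max' ht)) A) :
    ∃ α ∈ t, α < t.max' ht ∧ α ∈ chartPullback e f (t.erase α) := by
  set δ := t.max' ht
  set u := t.erase δ
  have hu_Iio : ↑u ⊆ Iio δ := fun x hx => t.lt_max'_of_mem_erase_max' ht hx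
  have hinj_u : InjOn (e δ) u := hinj.mono hu_Iio
  have hu_card : (u.image (e δ)).card = k + 1 := by
    rw [card_image_of_injOn hinj_u, card_erase_of_mem (t.max'_mem ht), hcard]
    rfl
  have hu_sub : ↑(u.image (e δ)) ⊆ A := by
    rw [coe_image]
    exact (hmaps.mono_left hu_Iio).image_subset
  obtain ⟨a, ha, hfa⟩ := hf _ hu_sub hu_card
  obtain ⟨α, hαu, rfl⟩ := mem_image.mp ha
  have hαδ : α < δ := hu_Iio hαu
  refine ⟨α, mem_of_mem_erase hαu, hαδ,
    mem_chartPullback (mem_erase.mpr ⟨hαδ.ne', t.max'_mem ht⟩)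
      (fun y hy => t.le_max' y (mem_of_mem_erase hy)) hαδ hinj ?_⟩
  have himage : (u.erase α).image (e δ) = (u.image (e δ)).erase (e δ α) := by
    rw [erase_eq, erase_eq, image_sdiff_of_injOn hinj_u (singleton_subset_iff.mpr hαu),
      Finset.image_singleton]
  rwa [erase_right_comm, himage]

end ChartPullback

theorem Ordinal.exists_injOn_Iio_ord {δ : Ordinal.{u}} {c : Cardinal.{v}}
    (h : Cardinal.lift.{v} δ.card ≤ Cardinal.lift.{u} c) :
    ∃ e : Ordinal.{u} → Ordinal.{v}, InjOn e (Iio δ) ∧ MapsTo e (Iio δ) (Iio c.ord) := by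
  obtain ⟨E⟩ : Nonempty (Iio δ ↪ Iio c.ord) := by
    rw [← Cardinal.lift_mk_le', Cardinal.mk_Iio_ordinal, Cardinal.mk_Iio_ordinal]
    simpa using Cardinal.lift_le.{max (u + 1) (v + 1)}.mpr h
  refine ⟨fun x => if hx : x < δ then E ⟨x, hx⟩ else 0, fun x hx y hy hxy => ?_, fun x hx => ?_⟩
  · simp only [dif_pos (show x < δ from hx), dif_pos (show y < δ from hy)] at hxy
    exact congrArg Subtype.val (E.injective (Subtype.ext hxy))
  · simp only [dif_pos (show x < δ from hx)]
    exact (E ⟨x, hx⟩).2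

theorem Ordinal.card_le_aleph_of_lt_ord_aleph_add_one {o δ : Ordinal}
    (h : δ < (Cardinal.aleph (o + 1)).ord) : δ.card ≤ Cardinal.aleph o := by
  rwa [Cardinal.lt_ord, ← Cardinal.succ_aleph, Order.lt_succ_iff] at h

theorem stmt5_general (n : ℕ) (f : Finset Ordinal → Finset Ordinal)
    (h2 : ∀ (u : Finset Ordinal) (hu : u.Nonempty),
        (∀ α ∈ u, α < (Cardinal.aleph n).ord) → u.card = n + 2 →
          ∃ α ∈ u, α < u.max' hu ∧ α ∈ f (u.erase α)) :
    ∃ g : Finset Ordinal → Finset Ordinal,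
      (∀ (s : Finset Ordinal) (hs : s.Nonempty),
          (∀ α ∈ s, α < (Cardinal.aleph (n + 1)).ord) → s.card = n + 2 →
            ∀ β ∈ g s, β < s.max' hs ∧ β < (Cardinal.aleph (n + 1)).ord) ∧
      (∀ (t : Finset Ordinal) (ht : t.Nonempty),
          (∀ α ∈ t, α < (Cardinal.aleph (n + 1)).ord) → t.card = n + 3 →
            ∃ α ∈ t, α < t.max' ht ∧ α ∈ g (t.erase α)) := by
  have hf : ∀ u : Finset Ordinal, ↑u ⊆ Iio (Cardinal.aleph n).ord → u.card = n + 1 + 1 →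
      ∃ a ∈ u, a ∈ f (u.erase a) := by
    intro u hu hcard
    obtain ⟨a, ha, -, hfa⟩ := h2 u (card_pos.mp (by omega)) hu hcard
    exact ⟨a, ha, hfa⟩
  have hcharts : ∀ δ : Ordinal.{u_2}, ∃ e : Ordinal.{u_2} → Ordinal.{u_1},
      δ < (Cardinal.aleph (n + 1)).ord →
        InjOn e (Iio δ) ∧ MapsTo e (Iio δ) (Iio (Cardinal.aleph n).ord) := by
    intro δ
    by_cases hδ : δ < (Cardinal.aleph (n + 1)).ord
    · obtain ⟨e, he⟩ := Ordinal.exists_injOn_Iio_ord (δ := δ) (c := Cardinal.aleph.{u_1} n) (by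
        simpa using Cardinal.lift_le.{u_1}.mpr (Ordinal.card_le_aleph_of_lt_ord_aleph_add_one hδ))
      exact ⟨e, fun _ => he⟩
    · exact ⟨0, fun h => absurd h hδ⟩
  choose e he using hcharts
  refine ⟨chartPullback e f, fun s hs hlt _ x hx => ?_, fun t ht hlt hcard => ?_⟩
  · have hx_lt := lt_max'_of_mem_chartPullback hs hx
    exact ⟨hx_lt, hx_lt.trans (hlt _ (s.max'_mem hs))⟩
  · have he_t := he _ (hlt _ (t.max'_mem ht))
    exact exists_mem_chartPullback_erase hf ht hcard he_t.1 he_t.2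

/-- The inductive step of Kuratowski's theorem: from a set mapping on `[ωₙ]^{n+1}`
satisfying the free set conditions, one obtains such a mapping on `[ω_{n+1}]^{n+2}`. -/
theorem stmt5 (n : ℕ) (f : Finset Ordinal → Finset Ordinal)
    (h1 : ∀ (s : Finset Ordinal) (hs : s.Nonempty),
        (∀ α ∈ s, α < (Cardinal.aleph n).ord) → s.card = n + 1 →
          ∀ β ∈ f s, β < s.max' hs ∧ β < (Cardinal.aleph n).ord)
    (h2 : ∀ (u : Finset Ordinal) (hu : u.Nonempty),
        (∀ α ∈ u, α < (Cardinal.aleph n).ord) → u.card = n + 2 →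
          ∃ α ∈ u, α < u.max' hu ∧ α ∈ f (u.erase α)) :
    ∃ g : Finset Ordinal → Finset Ordinal,
      (∀ (s : Finset Ordinal) (hs : s.Nonempty),
          (∀ α ∈ s, α < (Cardinal.aleph (n + 1)).ord) → s.card = n + 2 →
            ∀ β ∈ g s, β < s.max' hs ∧ β < (Cardinal.aleph (n + 1)).ord) ∧
      (∀ (t : Finset Ordinal) (ht : t.Nonempty),
          (∀ α ∈ t, α < (Cardinal.aleph (n + 1)).ord) → t.card = n + 3 →
            ∃ α ∈ t, α < t.max' ht ∧ α ∈ g (t.erase α)) :=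
  stmt5_general n f h2
end

section
/- Let (X, T) be a topological space and δ an ordinal, and suppose ⟨x_α : α < δ⟩ is a one-to-one enumeration of all the points of X. Let P be a family of countable subsets of δ (P ⊆ [δ]^{<ℵ_1}) such that: (1) P is hereditary, i.e. for every A ∈ P and every B ⊆ A, B ∈ P; and (2) there exists A ∈ P such that the subspace {x_α : α ∈ A} of X is homeomorphic to ℚ. Then the minimum of the set of order types {otp(A) : A ∈ P and the subspace {x_α : α ∈ A} is homeomorphic to ℚ} equals ω. -/
/-!
Pull the copy of `ℚ` back to an injection `g : ℚ → Ordinal` of indices. Among the open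
intervals of `ℚ`, pick one on which `sup g` is least; then `sup g` is the same ordinal `m` on
all its subintervals, and after shrinking the interval so as to avoid the (at most one) point
where `g` attains `m`, every value of `g` on the interval is exceeded by a value of `g` on each
of its subintervals. Enumerating the countably many subintervals, one picks one point in each,
with increasing indices: this is a dense subset of `ℚ`, hence again a copy of `ℚ`, whose set
of indices has order type `ω`. Conversely, a copy of `ℚ` is infinite, so its set of indices has
order type at least `ω`.
-/

section

open Set Function Topology

def ValuesExceededOnIntervals {α β : Type*} [Preorder α] [LinearOrder β] (f : β → α) : Prop :=
  ∀ a b, a < b → ∀ r, ∃ r' ∈ Ioo a b, f r < f r'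

theorem ValuesExceededOnIntervals.comp_orderIso {α β γ : Type*} [Preorder α] [LinearOrder β]
    [LinearOrder γ] {f : β → α} (hf : ValuesExceededOnIntervals f) (e : γ ≃o β) :
    ValuesExceededOnIntervals (f ∘ e) := by
  intro a b hab r
  obtain ⟨r', ⟨har', hr'b⟩, hlt⟩ := hf (e a) (e b) (e.lt_iff_lt.2 hab) (e r)
  refine ⟨e.symm r', ⟨?_, ?_⟩, by simpa using hlt⟩
  · simpa using e.symm.lt_iff_lt.2 har'
  · simpa using e.symm.lt_iff_lt.2 hr'b

theorem exists_Ioo_subset_forall_ne {α β : Type*} [LinearOrder β] {f : β → α}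
    (hf : Injective f) {p₀ q₀ : β} (h : p₀ < q₀) (m : α) :
    ∃ p q, p₀ ≤ p ∧ p < q ∧ q ≤ q₀ ∧ ∀ r ∈ Ioo p q, f r ≠ m := by
  by_cases hm : ∃ z ∈ Ioo p₀ q₀, f z = m
  · obtain ⟨z, hz, rfl⟩ := hm
    exact ⟨z, q₀, hz.1.le, hz.2, le_rfl, fun r hr hrz => hr.1.ne' (hf hrz)⟩
  · push Not at hm
    exact ⟨p₀, q₀, le_rfl, h, le_rfl, hm⟩

section WellOrderedValues

variable {α β : Type*} [ConditionallyCompleteLinearOrder α] [WellFoundedLT α]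
  [LinearOrder β] [DenselyOrdered β] [Nontrivial β]

theorem exists_valuesExceededOnIntervals_Ioo {f : β → α} (hf : Injective f)
    (hbdd : BddAbove (range f)) :
    ∃ p q : β, p < q ∧ ValuesExceededOnIntervals fun r : Ioo p q => f r := by
  let σ : β × β → α := fun ab => sSup (f '' Ioo ab.1 ab.2)
  have hσ_le {a b c d : β} (hca : c ≤ a) (hab : a < b) (hbd : b ≤ d) : σ (a, b) ≤ σ (c, d) :=
    csSup_le_csSup (hbdd.mono (image_subset_range _ _)) ((nonempty_Ioo.2 hab).image f)
      (image_mono (Ioo_subset_Ioo hca hbd))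
  obtain ⟨⟨p₀, q₀⟩, hpq₀ : p₀ < q₀, hmin⟩ := (InvImage.wf σ wellFounded_lt).has_min
    {ab | ab.1 < ab.2} (let ⟨a, b, h⟩ := exists_pair_lt β; ⟨(a, b), h⟩)
  obtain ⟨p, q, hp, hpq, hq, hne⟩ := exists_Ioo_subset_forall_ne hf hpq₀ (σ (p₀, q₀))
  have hσ_eq {a b : β} (ha : p₀ ≤ a) (hab : a < b) (hb : b ≤ q₀) : σ (a, b) = σ (p₀, q₀) :=
    (hσ_le ha hab hb).antisymm (not_lt.1 (hmin (a, b) hab))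
  refine ⟨p, q, hpq, fun a b hab r => ?_⟩
  have hr : f r < σ (a, b) := by
    rw [hσ_eq (hp.trans a.2.1.le) hab (b.2.2.le.trans hq)]
    refine (le_csSup (hbdd.mono (image_subset_range _ _)) ?_).lt_of_ne (hne r r.2)
    exact ⟨r, ⟨hp.trans_lt r.2.1, r.2.2.trans_le hq⟩, rfl⟩
  obtain ⟨_, ⟨r', hr', rfl⟩, hlt⟩ :=
    exists_lt_of_lt_csSup ((nonempty_Ioo.2 (Subtype.coe_lt_coe.2 hab)).image f) hr
  exact ⟨⟨r', a.2.1.trans hr'.1, hr'.2.trans b.2.2⟩, hr', hlt⟩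

theorem exists_isEmbedding_valuesExceededOnIntervals_comp [TopologicalSpace β]
    [OrderTopology β] [Countable β] [NoMinOrder β] [NoMaxOrder β] {f : β → α}
    (hf : Injective f) (hbdd : BddAbove (range f)) :
    ∃ φ : β → β, IsEmbedding φ ∧ ValuesExceededOnIntervals (f ∘ φ) := by
  obtain ⟨p, q, hpq, hexc⟩ := exists_valuesExceededOnIntervals_Ioo hf hbdd
  have : Nonempty (Ioo p q) := (nonempty_Ioo.2 hpq).to_subtype
  obtain ⟨ψ⟩ := Order.iso_of_countable_dense β (Ioo p q)
  exact ⟨_, IsEmbedding.subtypeVal.comp ψ.toHomeomorph.isEmbedding, hexc.comp_orderIso ψ⟩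

end WellOrderedValues

theorem exists_strictMono_comp_forall_mem {α β : Type*} [Preorder α] [Nonempty β] {f : β → α}
    {T : ℕ → Set β} (hT : ∀ n r, ∃ r' ∈ T n, f r < f r') :
    ∃ s : ℕ → β, StrictMono (f ∘ s) ∧ ∀ n, s n ∈ T n := by
  choose next hnext_mem hnext_lt using hT
  let s : ℕ → β := fun n => Nat.rec (next 0 (Classical.arbitrary β)) (fun k r => next (k + 1) r) n
  refine ⟨s, strictMono_nat_of_lt_succ fun n => hnext_lt (n + 1) (s n), ?_⟩
  rintro (_ | n)
  exacts [hnext_mem _ _, hnext_mem _ _]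

theorem ValuesExceededOnIntervals.exists_strictMono_comp_dense {α β : Type*} [Preorder α]
    [LinearOrder β] [TopologicalSpace β] [OrderTopology β] [Countable β] [Nontrivial β]
    {f : β → α} (hf : ValuesExceededOnIntervals f) :
    ∃ s : ℕ → β, StrictMono (f ∘ s) ∧ Dense (range s) := by
  have : Nonempty {ab : β × β // ab.1 < ab.2} :=
    let ⟨a, b, hab⟩ := exists_pair_lt β; ⟨⟨(a, b), hab⟩⟩
  obtain ⟨u, hu⟩ := exists_surjective_nat {ab : β × β // ab.1 < ab.2}
  obtain ⟨s, hs_mono, hs_mem⟩ := exists_strictMono_comp_forall_mem (f := f)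
    (T := fun n => Ioo (u n).1.1 (u n).1.2) fun n => hf _ _ (u n).2
  refine ⟨s, hs_mono, dense_of_exists_between fun a b hab => ?_⟩
  obtain ⟨n, hn⟩ := hu ⟨(a, b), hab⟩
  exact ⟨s n, mem_range_self n, by simpa [hn] using hs_mem n⟩

theorem Dense.nonempty_homeomorph_rat {β : Type*} [LinearOrder β] [TopologicalSpace β]
    [OrderTopology β] [DenselyOrdered β] [NoMinOrder β] [NoMaxOrder β] [Countable β]
    [Nontrivial β] {S : Set β} (hS : Dense S) : Nonempty (S ≃ₜ ℚ) := by
  have between {a b : β} (hab : a < b) : ∃ c : S, a < c ∧ (c : β) < b :=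
    let ⟨c, hcS, hc⟩ := hS.exists_between hab; ⟨⟨c, hcS⟩, hc⟩
  have : OrderTopology S := induced_orderTopology _ Iff.rfl fun hab =>
    let ⟨c, hc⟩ := between hab; ⟨c, hc⟩
  have : DenselyOrdered S := ⟨fun a b hab => between hab⟩
  have : NoMinOrder S := ⟨fun a => let ⟨b, hb⟩ := exists_lt (a : β)
    let ⟨c, hc⟩ := between hb; ⟨c, hc.2⟩⟩
  have : NoMaxOrder S := ⟨fun a => let ⟨b, hb⟩ := exists_gt (a : β)
    let ⟨c, hc⟩ := between hb; ⟨c, hc.1⟩⟩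
  have : Nonempty S := hS.nonempty.to_subtype
  obtain ⟨e⟩ := Order.iso_of_countable_dense S ℚ
  exact ⟨e.toHomeomorph⟩

namespace Ordinal

theorem type_subrel_range_of_strictMono {t : ℕ → Ordinal} (ht : StrictMono t) :
    type (Subrel ((· < ·) : Ordinal → Ordinal → Prop) (· ∈ range t)) = ω := by
  have := (ht.orderIso t).toRelIsoLT.ordinal_lift_type_eq
  rwa [type_nat_lt, lift_omega0, lift_uzero, eq_comm] at this

theorem omega0_le_type_subrel_of_infinite {A : Set Ordinal} (hA : A.Infinite) :
    ω ≤ type (Subrel ((· < ·) : Ordinal → Ordinal → Prop) (· ∈ A)) := by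
  rw [← aleph0_le_card, card_type, ← Cardinal.infinite_iff]
  exact hA.to_subtype

end Ordinal

end

theorem stmt6_general (X : Type*) [TopologicalSpace X] (x : Ordinal → X)
    (P : Set (Set Ordinal))
    (hher : ∀ A ∈ P, ∀ B ⊆ A, B ∈ P)
    (hex : ∃ A ∈ P, Nonempty (↥(x '' A) ≃ₜ ℚ)) :
    sInf {o : Ordinal | ∃ A ∈ P, Nonempty (↥(x '' A) ≃ₜ ℚ) ∧
        Ordinal.type (Subrel ((· < ·) : Ordinal → Ordinal → Prop) (· ∈ A)) = o}
      = Ordinal.omega0 := by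
  obtain ⟨A, hA, ⟨e⟩⟩ := hex
  choose g hgA hgx using fun r => (e.symm r).2
  have hg : Function.Injective g := fun a b hab => e.symm.injective <| Subtype.ext <| by
    rw [← hgx, ← hgx, hab]
  obtain ⟨φ, hφ, hexc⟩ :=
    exists_isEmbedding_valuesExceededOnIntervals_comp hg Ordinal.bddAbove_of_small
  obtain ⟨s, hs_mono, hs_dense⟩ := hexc.exists_strictMono_comp_dense
  let F : ℚ → X := fun r => e.symm (φ r)
  have hF : Topology.IsEmbedding F :=
    Topology.IsEmbedding.subtypeVal.comp (e.symm.isEmbedding.comp hφ)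
  have hxB : x '' Set.range (g ∘ φ ∘ s) = F '' Set.range s := by
    rw [← Set.range_comp, ← Set.range_comp]
    exact congrArg Set.range (funext fun n => hgx _)
  obtain ⟨eS⟩ := hs_dense.nonempty_homeomorph_rat
  have hω : Ordinal.omega0 ∈ {o : Ordinal | ∃ A ∈ P, Nonempty (↥(x '' A) ≃ₜ ℚ) ∧
      Ordinal.type (Subrel ((· < ·) : Ordinal → Ordinal → Prop) (· ∈ A)) = o} :=
    ⟨_, hher A hA _ (Set.range_subset_iff.2 fun n => hgA _),
      ⟨(Homeomorph.setCongr hxB).trans ((hF.homeomorphImage _).symm.trans eS)⟩,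
      Ordinal.type_subrel_range_of_strictMono hs_mono⟩
  refine le_antisymm (csInf_le' hω) (le_csInf ⟨_, hω⟩ ?_)
  rintro _ ⟨A', -, ⟨e'⟩, rfl⟩
  have : Infinite (x '' A') := e'.toEquiv.infinite_iff.2 inferInstance
  exact Ordinal.omega0_le_type_subrel_of_infinite ((Set.infinite_coe_iff.1 this).of_image x)

/-- When looking for copies of `ℚ` inside a well-ordered topological space on which a
hereditary family concentrates, one can always find one of order type `ω`: the minimal
order type of a member of a hereditary family `P` of countable sets of indices whose
corresponding subspace is homeomorphic to `ℚ` equals `ω`. -/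
theorem stmt6 (X : Type*) [TopologicalSpace X] (δ : Ordinal.{0}) (x : Ordinal → X)
    (hinj : ∀ α < δ, ∀ β < δ, x α = x β → α = β)
    (hsurj : ∀ p : X, ∃ α < δ, x α = p)
    (P : Set (Set Ordinal))
    (hP : ∀ A ∈ P, A.Countable ∧ A ⊆ Set.Iio δ)
    (hher : ∀ A ∈ P, ∀ B ⊆ A, B ∈ P)
    (hex : ∃ A ∈ P, Nonempty (↥(x '' A) ≃ₜ ℚ)) :
    sInf {o : Ordinal | ∃ A ∈ P, Nonempty (↥(x '' A) ≃ₜ ℚ) ∧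
        Ordinal.type (Subrel ((· < ·) : Ordinal → Ordinal → Prop) (· ∈ A)) = o}
      = Ordinal.omega0 :=
  stmt6_general X x P hher hex
end
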